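/- Suppose g: ℝ_{>0} × ℝ^d × S^{d−1} → ℝ is C¹ and the function f_t(Q, V, ξ, V₊) := g_t(Q, V) σ(V, V₊) e^{−ν ξ} (with σ ≥ 0 satisfying ∫_{S^{d−1}} σ(V₀, V) dV₀ = ν for all V) satisfies the generalized linear Boltzmann equation [∂_t + V·∇_Q − ∂_ξ] f_t(Q,V,ξ,V₊) = ∫_{S^{d−1}} f_t(Q, V₀, 0, V) σ(V, V₊) e^{−νξ} dV₀ for all arguments. Then g satisfies the classical linear Boltzmann equation [∂_t + V·∇_Q] g_t(Q,V) = ∫_{S^{d−1}} [g_t(Q,V₀) − g_t(Q,V)] σ(V₀, V) dV₀, provided σ is symmetric: σ(V₀,V) = σ(V,V₀). -/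
import Mathlib


open MeasureTheory Real

/-- The unit sphere S^{d-1} ⊂ ℝ^d. -/
abbrev Sph (d : ℕ) := Metric.sphere (0 : EuclideanSpace ℝ (Fin d)) 1

/-- The surface measure on the unit sphere S^{d-1}. -/
noncomputable def sphereMeasure (d : ℕ) : Measure (Sph d) :=
  (volume : Measure (EuclideanSpace ℝ (Fin d))).toSphere

/-- If `f_t(Q,V,ξ,Vplus) = g_t(Q,V) σ(V,Vplus) e^{−νξ}` satisfies the generalized linear
Boltzmann equation with the memoryless collision kernel `p₀(V₀,V,ξ,Vplus) = σ(V,Vplus) e^{−νξ}`,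
then `g` satisfies the classical linear Boltzmann equation. Here the generalized equation
`[∂_t + V·∇_Q − ∂_ξ] f_t = ∫ f_t(Q,V₀,0,V) σ(V,Vplus) e^{−νξ} dV₀` is written out using
`∂_ξ f_t = −ν f_t`, valid for the explicit exponential `ξ`-dependence of `f_t`. -/
theorem linear_boltzmann_from_generalized (d : ℕ) (hd : 2 ≤ d) (ν : ℝ) (hν : 0 < ν)
    (σ : Sph d → Sph d → ℝ)
    (hσcont : Continuous fun p : Sph d × Sph d => σ p.1 p.2)
    (hσpos : ∀ V₀ V, 0 ≤ σ V₀ V)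
    (hσsymm : ∀ V₀ V, σ V₀ V = σ V V₀)
    (hσtot : ∀ V, (∫ V₀, σ V₀ V ∂(sphereMeasure d)) = ν)
    (g dtg : ℝ → EuclideanSpace ℝ (Fin d) → Sph d → ℝ)
    (dQg : ℝ → EuclideanSpace ℝ (Fin d) → Sph d → (EuclideanSpace ℝ (Fin d) →L[ℝ] ℝ))
    (hC1t : ∀ t Q V, HasDerivAt (fun s => g s Q V) (dtg t Q V) t)
    (hC1Q : ∀ t Q V, HasFDerivAt (fun q => g t q V) (dQg t Q V) Q)
    (hint : ∀ t Q V, Integrable (fun V₀ => g t Q V₀ * σ V₀ V) (sphereMeasure d))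
    (hgen : ∀ (t : ℝ) (Q : EuclideanSpace ℝ (Fin d)) (V : Sph d) (ξ : ℝ) (Vplus : Sph d),
      0 < t → 0 < ξ →
      (dtg t Q V + dQg t Q V (V : EuclideanSpace ℝ (Fin d)) + ν * g t Q V) *
          (σ V Vplus * Real.exp (-ν * ξ))
        = ∫ V₀, g t Q V₀ * σ V₀ V * (σ V Vplus * Real.exp (-ν * ξ)) ∂(sphereMeasure d)) :
    ∀ (t : ℝ) (Q : EuclideanSpace ℝ (Fin d)) (V : Sph d), 0 < t →
      dtg t Q V + dQg t Q V (V : EuclideanSpace ℝ (Fin d))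
        = ∫ V₀, (g t Q V₀ - g t Q V) * σ V₀ V ∂(sphereMeasure d) := by

  intro t Q V ht
  -- σ(·, V) is integrable
  have hσint : Integrable (fun V₀ => σ V₀ V) (sphereMeasure d) := by
    by_contra h
    have := hσtot V
    rw [integral_undef h] at this
    exact hν.ne this
  -- there is Vplus with σ V Vplus ≠ 0
  obtain ⟨Vplus, hVp⟩ : ∃ Vplus, σ V Vplus ≠ 0 := by
    by_contra h
    push_neg at h
    have := hσtot V
    rw [integral_congr_ae (Filter.Eventually.of_forall fun V₀ => by
      rw [hσsymm V₀ V, h V₀])] at this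
    simp at this
    exact hν.ne' this.symm
  have hc : σ V Vplus * Real.exp (-ν * 1) ≠ 0 :=
    mul_ne_zero hVp (Real.exp_ne_zero _)
  have key : dtg t Q V + dQg t Q V (V : EuclideanSpace ℝ (Fin d)) + ν * g t Q V
      = ∫ V₀, g t Q V₀ * σ V₀ V ∂(sphereMeasure d) := by
    have h := hgen t Q V 1 Vplus ht one_pos
    rw [integral_mul_const] at h
    exact mul_right_cancel₀ hc h
  have hrhs : (∫ V₀, (g t Q V₀ - g t Q V) * σ V₀ V ∂(sphereMeasure d))
      = (∫ V₀, g t Q V₀ * σ V₀ V ∂(sphereMeasure d)) - g t Q V * ν := by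
    have : (∫ V₀, (g t Q V₀ - g t Q V) * σ V₀ V ∂(sphereMeasure d))
        = (∫ V₀, g t Q V₀ * σ V₀ V ∂(sphereMeasure d))
          - ∫ V₀, g t Q V * σ V₀ V ∂(sphereMeasure d) := by
      rw [← integral_sub (hint t Q V) (hσint.const_mul _)]
      congr 1
      ext V₀
      ring
    rw [this, integral_const_mul, hσtot V]
  rw [hrhs]
  linarith [key]
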